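/- Let (X,d) be a metric space and t > 0. Let μ_1, …, μ_n be finitely supported probability measures on X with pairwise disjoint supports, let λ_1, …, λ_n > 0 with ∑_{i=1}^n λ_i = 1, and set μ = ∑_{i=1}^n λ_i μ_i. Let β be a fractional partition on [n] with β(∅) = 0, and for each nonempty s ⊆ [n] set μ_s = (∑_{i ∈ s} λ_i μ_i)/(∑_{i ∈ s} λ_i). Then D_1(μ) ≤ ∑_{s ⊆ [n], s ≠ ∅} β(s)·D_1(μ_s). -/

import Mathlib

/-- A finitely supported probability measure on `X`: nonnegative, total mass one. -/
def IsFinProb {X : Type*} (p : X →₀ ℝ) : Prop :=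
  (∀ x, 0 ≤ p x) ∧ (∑ x ∈ p.support, p x) = 1

/-- The Laplace-kernel smoothing `(Zp)(x) = ∑_y e^{−t·d(x,y)}·p(y)`. -/
noncomputable def Zker {X : Type*} [MetricSpace X] (t : ℝ) (p : X →₀ ℝ) (x : X) : ℝ :=
  ∑ y ∈ p.support, Real.exp (-(t * dist x y)) * p y

/-- A fractional partition on `[n]`: a nonnegative function on subsets of `[n]` such
that for every `i`, the weights of the sets containing `i` sum to `1`. -/
def IsFracPartition {n : ℕ} (β : Finset (Fin n) → ℝ) : Prop :=
  (∀ s, 0 ≤ β s) ∧ ∀ i : Fin n, (∑ s : Finset (Fin n), if i ∈ s then β s else 0) = 1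

/-- The exponentiated kernelized 1-complexity:
`D_1(p) = exp(−∑_{x ∈ supp p} p(x)·log((Zp)(x)))`. -/
noncomputable def Done {X : Type*} [MetricSpace X] (t : ℝ) (p : X →₀ ℝ) : ℝ :=
  Real.exp (-∑ x ∈ p.support, p x * Real.log (Zker t p x))

/-- `Zker` evaluated as a sum over any superset of the support. -/
theorem Zker_eq_sum_superset {X : Type*} [MetricSpace X] (t : ℝ) (p : X →₀ ℝ)
    {B : Finset X} (hB : p.support ⊆ B) (x : X) :
    Zker t p x = ∑ y ∈ B, Real.exp (-(t * dist x y)) * p y :=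
  Finset.sum_subset hB fun y _ hy => by
    rw [Finsupp.notMem_support_iff.mp hy, mul_zero]

theorem Zker_smul {X : Type*} [MetricSpace X] (t : ℝ) (c : ℝ) (p : X →₀ ℝ) (x : X) :
    Zker t (c • p) x = c * Zker t p x := by
  rw [Zker_eq_sum_superset t (c • p) Finsupp.support_smul x]
  unfold Zker
  rw [Finset.mul_sum]
  refine Finset.sum_congr rfl fun y _ => ?_
  rw [Finsupp.smul_apply, smul_eq_mul]; ring

/-- Fractional subadditivity of exponentiated 1-complexity over mixtures with
pairwise disjointly supported components. -/
theorem Done_fractionally_subadditive {X : Type*} [MetricSpace X]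
    (t : ℝ) (ht : 0 < t)
    (n : ℕ) (μ : Fin n → (X →₀ ℝ)) (hμ : ∀ i, IsFinProb (μ i))
    (hdisj : ∀ i j, i ≠ j → Disjoint (μ i).support (μ j).support)
    (lam : Fin n → ℝ) (hlam : ∀ i, 0 < lam i) (hsum : (∑ i, lam i) = 1)
    (β : Finset (Fin n) → ℝ) (hβ : IsFracPartition β) (hβ0 : β ∅ = 0) :
    Done t (∑ i, lam i • μ i) ≤
      ∑ s ∈ Finset.univ.filter (fun s : Finset (Fin n) => s ≠ ∅),
        β s * Done t ((∑ i ∈ s, lam i)⁻¹ • ∑ i ∈ s, lam i • μ i) := by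
  classical
  have hμ0 : ∀ i x, 0 ≤ μ i x := fun i => (hμ i).1
  set ν : X →₀ ℝ := ∑ i, lam i • μ i with hν
  set Lam : Finset (Fin n) → ℝ := fun s => ∑ i ∈ s, lam i with hLam
  set m : Finset (Fin n) → (X →₀ ℝ) := fun s => ∑ i ∈ s, lam i • μ i with hm
  set νs : Finset (Fin n) → (X →₀ ℝ) := fun s => (Lam s)⁻¹ • m s with hνsdef
  set F : Finset (Finset (Fin n)) :=
    Finset.univ.filter (fun s : Finset (Fin n) => s ≠ ∅) with hF
  have hν_eq : ν = m Finset.univ := by rw [hν]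
  -- pointwise values
  have happ : ∀ (s : Finset (Fin n)) (x : X), m s x = ∑ i ∈ s, lam i * μ i x := by
    intro s x
    simp only [hm]
    rw [Finsupp.finset_sum_apply]
    exact Finset.sum_congr rfl fun i _ => by rw [Finsupp.smul_apply, smul_eq_mul]
  -- supports
  have hms : ∀ s : Finset (Fin n),
      (m s).support = s.biUnion (fun i => (μ i).support) := by
    intro s
    ext x
    simp only [Finsupp.mem_support_iff, Finset.mem_biUnion, happ]
    constructor
    · intro h
      by_contra hc
      push_neg at hc
      exact h (Finset.sum_eq_zero fun i hi => by rw [hc i hi, mul_zero])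
    · rintro ⟨i, hi, hx⟩ h
      have h0 := (Finset.sum_eq_zero_iff_of_nonneg
        (fun j _ => mul_nonneg (hlam j).le (hμ0 j x))).mp h i hi
      rcases mul_eq_zero.mp h0 with h' | h'
      · exact (hlam i).ne' h'
      · exact hx h'
  have hmval : ∀ (s : Finset (Fin n)) (i : Fin n), i ∈ s → ∀ x ∈ (μ i).support,
      m s x = lam i * μ i x := by
    intro s i hi x hx
    rw [happ]
    refine Finset.sum_eq_single_of_mem i hi fun j hj hji => ?_
    have hxj : x ∉ (μ j).support := Finset.disjoint_right.mp (hdisj j i hji) hx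
    rw [Finsupp.notMem_support_iff.mp hxj, mul_zero]
  have hLpos : ∀ s : Finset (Fin n), s.Nonempty → 0 < Lam s := by
    intro s hs
    simp only [hLam]
    exact Finset.sum_pos (fun i _ => hlam i) hs
  -- Zker facts
  have hZnn : ∀ (i : Fin n) (x : X), 0 ≤ Zker t (μ i) x := fun i x =>
    Finset.sum_nonneg fun y _ => mul_nonneg (Real.exp_pos _).le (hμ0 i y)
  have hZpos : ∀ (i : Fin n), ∀ x ∈ (μ i).support, 0 < Zker t (μ i) x := by
    intro i x hx
    refine Finset.sum_pos' (fun y _ => mul_nonneg (Real.exp_pos _).le (hμ0 i y)) ⟨x, hx, ?_⟩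
    exact mul_pos (Real.exp_pos _)
      (lt_of_le_of_ne (hμ0 i x) (Ne.symm (Finsupp.mem_support_iff.mp hx)))
  have hSA : ∀ i : Fin n,
      (μ i).support ⊆ Finset.univ.biUnion (fun i => (μ i).support) :=
    fun i => Finset.subset_biUnion_of_mem (fun j => (μ j).support) (Finset.mem_univ i)
  have hZm : ∀ (s : Finset (Fin n)) (x : X),
      Zker t (m s) x = ∑ i ∈ s, lam i * Zker t (μ i) x := by
    intro s x
    rw [Zker_eq_sum_superset t (m s) (B := Finset.univ.biUnion fun j => (μ j).support)
      (by rw [hms]; exact Finset.biUnion_subset_biUnion_of_subset_left _ (Finset.subset_univ s)) x]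
    have h1 : ∀ y : X, Real.exp (-(t * dist x y)) * m s y
        = ∑ i ∈ s, lam i * (Real.exp (-(t * dist x y)) * μ i y) := by
      intro y
      rw [happ, Finset.mul_sum]
      exact Finset.sum_congr rfl fun i _ => by ring
    simp_rw [h1]
    rw [Finset.sum_comm]
    refine Finset.sum_congr rfl fun i _ => ?_
    rw [← Finset.mul_sum, ← Zker_eq_sum_superset t (μ i) (hSA i) x]
  have hZνs : ∀ (s : Finset (Fin n)) (x : X),
      Zker t (νs s) x = (Lam s)⁻¹ * ∑ i ∈ s, lam i * Zker t (μ i) x := by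
    intro s x
    simp only [hνsdef]
    rw [Zker_smul, hZm]
  have hνs_supp : ∀ s : Finset (Fin n), s.Nonempty →
      (νs s).support = s.biUnion (fun i => (μ i).support) := by
    intro s hs
    simp only [hνsdef]
    rw [Finsupp.support_smul_eq (inv_ne_zero (hLpos s hs).ne'), hms]
  have hνs_val : ∀ (s : Finset (Fin n)) (i : Fin n), i ∈ s → ∀ x ∈ (μ i).support,
      νs s x = (Lam s)⁻¹ * (lam i * μ i x) := by
    intro s i hi x hx
    simp only [hνsdef, Finsupp.smul_apply, smul_eq_mul]
    rw [hmval s i hi x hx]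
  have hTpos : ∀ (s : Finset (Fin n)) (i : Fin n), i ∈ s → ∀ x ∈ (μ i).support,
      0 < ∑ j ∈ s, lam j * Zker t (μ j) x := by
    intro s i hi x hx
    exact Finset.sum_pos' (fun j _ => mul_nonneg (hlam j).le (hZnn j x))
      ⟨i, hi, mul_pos (hlam i) (hZpos i x hx)⟩
  have hZνs_pos : ∀ (s : Finset (Fin n)) (i : Fin n), i ∈ s → ∀ x ∈ (μ i).support,
      0 < Zker t (νs s) x := by
    intro s i hi x hx
    rw [hZνs]
    exact mul_pos (inv_pos.mpr (hLpos s ⟨i, hi⟩)) (hTpos s i hi x hx)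
  -- key pointwise log inequality
  have hkey : ∀ (s : Finset (Fin n)) (i : Fin n), i ∈ s → ∀ x ∈ (μ i).support,
      Real.log (Lam s) + Real.log (Zker t (νs s) x) ≤ Real.log (Zker t ν x) := by
    intro s i hi x hx
    have hLs := hLpos s ⟨i, hi⟩
    have hT := hTpos s i hi x hx
    have h1 : Lam s * Zker t (νs s) x = ∑ j ∈ s, lam j * Zker t (μ j) x := by
      rw [hZνs]
      field_simp
    have h2 : (∑ j ∈ s, lam j * Zker t (μ j) x) ≤ Zker t ν x := by
      rw [hν_eq, hZm]
      exact Finset.sum_le_sum_of_subset_of_nonneg (Finset.subset_univ s)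
        (fun j _ _ => mul_nonneg (hlam j).le (hZnn j x))
    calc Real.log (Lam s) + Real.log (Zker t (νs s) x)
        = Real.log (Lam s * Zker t (νs s) x) :=
          (Real.log_mul hLs.ne' (hZνs_pos s i hi x hx).ne').symm
      _ = Real.log (∑ j ∈ s, lam j * Zker t (μ j) x) := by rw [h1]
      _ ≤ Real.log (Zker t ν x) := Real.log_le_log hT h2
  have hpt : ∀ (i : Fin n), ∀ x ∈ (μ i).support,
      (∑ s : Finset (Fin n), (if i ∈ s then β s else 0)
        * (Real.log (Lam s) + Real.log (Zker t (νs s) x)))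
        ≤ Real.log (Zker t ν x) := by
    intro i x hx
    calc (∑ s : Finset (Fin n), (if i ∈ s then β s else 0)
          * (Real.log (Lam s) + Real.log (Zker t (νs s) x)))
        ≤ ∑ s : Finset (Fin n), (if i ∈ s then β s else 0) * Real.log (Zker t ν x) := by
          refine Finset.sum_le_sum fun s _ => ?_
          by_cases hi : i ∈ s
          · simp only [if_pos hi]
            exact mul_le_mul_of_nonneg_left (hkey s i hi x hx) (hβ.1 s)
          · simp [hi]
      _ = Real.log (Zker t ν x) := by
          rw [← Finset.sum_mul, hβ.2 i, one_mul]
  -- the quantity Q s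
  set Q : Finset (Fin n) → ℝ := fun s =>
    ∑ x ∈ (νs s).support, νs s x * Real.log (Zker t (νs s) x) with hQ
  have hpd : ∀ s : Finset (Fin n),
      (↑s : Set (Fin n)).PairwiseDisjoint (fun i => (μ i).support) :=
    fun s i _ j _ hij => hdisj i j hij
  -- main inequality on logarithms
  have hM : (∑ i, ∑ x ∈ (μ i).support, ∑ s : Finset (Fin n),
        (if i ∈ s then β s else 0)
          * ((lam i * μ i x) * (Real.log (Lam s) + Real.log (Zker t (νs s) x))))
      ≤ ∑ i, ∑ x ∈ (μ i).support, (lam i * μ i x) * Real.log (Zker t ν x) := by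
    refine Finset.sum_le_sum fun i _ => Finset.sum_le_sum fun x hx => ?_
    have hc : 0 ≤ lam i * μ i x := mul_nonneg (hlam i).le (hμ0 i x)
    calc (∑ s : Finset (Fin n), (if i ∈ s then β s else 0)
            * ((lam i * μ i x) * (Real.log (Lam s) + Real.log (Zker t (νs s) x))))
        = (lam i * μ i x) * ∑ s : Finset (Fin n), (if i ∈ s then β s else 0)
            * (Real.log (Lam s) + Real.log (Zker t (νs s) x)) := by
          rw [Finset.mul_sum]
          exact Finset.sum_congr rfl fun s _ => by ring
      _ ≤ (lam i * μ i x) * Real.log (Zker t ν x) :=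
          mul_le_mul_of_nonneg_left (hpt i x hx) hc
  -- rewrite the RHS of hM
  have hRHS : (∑ x ∈ ν.support, ν x * Real.log (Zker t ν x))
      = ∑ i, ∑ x ∈ (μ i).support, (lam i * μ i x) * Real.log (Zker t ν x) := by
    have hsupp_ν : ν.support = Finset.univ.biUnion (fun i => (μ i).support) := by
      rw [hν_eq, hms]
    rw [hsupp_ν, Finset.sum_biUnion (hpd Finset.univ)]
    refine Finset.sum_congr rfl fun i _ => Finset.sum_congr rfl fun x hx => ?_
    rw [show ν x = lam i * μ i x from by
      rw [hν_eq]; exact hmval Finset.univ i (Finset.mem_univ i) x hx]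
  -- rewrite the LHS of hM
  have hLHS : (∑ i, ∑ x ∈ (μ i).support, ∑ s : Finset (Fin n),
        (if i ∈ s then β s else 0)
          * ((lam i * μ i x) * (Real.log (Lam s) + Real.log (Zker t (νs s) x))))
      = ∑ s ∈ F, (β s * Lam s) * (Real.log (Lam s) + Q s) := by
    calc (∑ i, ∑ x ∈ (μ i).support, ∑ s : Finset (Fin n),
          (if i ∈ s then β s else 0)
            * ((lam i * μ i x) * (Real.log (Lam s) + Real.log (Zker t (νs s) x))))
        = ∑ i, ∑ s : Finset (Fin n), ∑ x ∈ (μ i).support,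
            (if i ∈ s then β s else 0)
              * ((lam i * μ i x) * (Real.log (Lam s) + Real.log (Zker t (νs s) x))) :=
          Finset.sum_congr rfl fun i _ => Finset.sum_comm
      _ = ∑ s : Finset (Fin n), ∑ i, ∑ x ∈ (μ i).support,
            (if i ∈ s then β s else 0)
              * ((lam i * μ i x) * (Real.log (Lam s) + Real.log (Zker t (νs s) x))) :=
          Finset.sum_comm
      _ = ∑ s : Finset (Fin n), β s * ∑ i ∈ s, ∑ x ∈ (μ i).support,
            (lam i * μ i x) * (Real.log (Lam s) + Real.log (Zker t (νs s) x)) := by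
          refine Finset.sum_congr rfl fun s _ => ?_
          calc (∑ i, ∑ x ∈ (μ i).support,
                (if i ∈ s then β s else 0)
                  * ((lam i * μ i x) * (Real.log (Lam s) + Real.log (Zker t (νs s) x))))
              = ∑ i, (if i ∈ s then
                  β s * ∑ x ∈ (μ i).support,
                    (lam i * μ i x) * (Real.log (Lam s) + Real.log (Zker t (νs s) x)) else 0) := by
                refine Finset.sum_congr rfl fun i _ => ?_
                by_cases hi : i ∈ s
                · simp only [if_pos hi, Finset.mul_sum]
                · simp only [if_neg hi, zero_mul, Finset.sum_const_zero]
            _ = ∑ i ∈ Finset.univ ∩ s,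
                  β s * ∑ x ∈ (μ i).support,
                    (lam i * μ i x) * (Real.log (Lam s) + Real.log (Zker t (νs s) x)) :=
                Finset.sum_ite_mem _ _ _
            _ = β s * ∑ i ∈ s, ∑ x ∈ (μ i).support,
                  (lam i * μ i x) * (Real.log (Lam s) + Real.log (Zker t (νs s) x)) := by
                rw [Finset.univ_inter, Finset.mul_sum]
      _ = ∑ s ∈ F, β s * ∑ i ∈ s, ∑ x ∈ (μ i).support,
            (lam i * μ i x) * (Real.log (Lam s) + Real.log (Zker t (νs s) x)) := by
          simp only [hF]
          refine (Finset.sum_filter_of_ne fun s _ h => ?_).symm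
          intro hs
          rw [hs, hβ0, zero_mul] at h
          exact h rfl
      _ = ∑ s ∈ F, (β s * Lam s) * (Real.log (Lam s) + Q s) := by
          refine Finset.sum_congr rfl fun s hs => ?_
          have hsne : s.Nonempty := Finset.nonempty_iff_ne_empty.mpr (by
            rw [hF] at hs; exact (Finset.mem_filter.mp hs).2)
          have hLs := hLpos s hsne
          have hinner : (∑ i ∈ s, ∑ x ∈ (μ i).support,
                (lam i * μ i x) * (Real.log (Lam s) + Real.log (Zker t (νs s) x)))
              = Lam s * Real.log (Lam s) + Lam s * Q s := by
            have e1 : ∀ i ∈ s, (∑ x ∈ (μ i).support,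
                  (lam i * μ i x) * (Real.log (Lam s) + Real.log (Zker t (νs s) x)))
                = lam i * Real.log (Lam s)
                  + ∑ x ∈ (μ i).support, (lam i * μ i x) * Real.log (Zker t (νs s) x) := by
              intro i _
              have hmass : (∑ x ∈ (μ i).support, (lam i * μ i x) * Real.log (Lam s))
                  = lam i * Real.log (Lam s) := by
                rw [show (∑ x ∈ (μ i).support, (lam i * μ i x) * Real.log (Lam s))
                    = (∑ x ∈ (μ i).support, μ i x) * (lam i * Real.log (Lam s)) from by
                  rw [Finset.sum_mul]; exact Finset.sum_congr rfl fun x _ => by ring]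
                rw [(hμ i).2, one_mul]
              calc (∑ x ∈ (μ i).support,
                    (lam i * μ i x) * (Real.log (Lam s) + Real.log (Zker t (νs s) x)))
                  = ∑ x ∈ (μ i).support, ((lam i * μ i x) * Real.log (Lam s)
                      + (lam i * μ i x) * Real.log (Zker t (νs s) x)) :=
                    Finset.sum_congr rfl fun x _ => by ring
                _ = (∑ x ∈ (μ i).support, (lam i * μ i x) * Real.log (Lam s))
                      + ∑ x ∈ (μ i).support, (lam i * μ i x) * Real.log (Zker t (νs s) x) :=
                    Finset.sum_add_distrib
                _ = lam i * Real.log (Lam s)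
                      + ∑ x ∈ (μ i).support, (lam i * μ i x) * Real.log (Zker t (νs s) x) := by
                    rw [hmass]
            rw [Finset.sum_congr rfl e1, Finset.sum_add_distrib]
            congr 1
            · rw [← Finset.sum_mul]
            · have e2 : Q s = ∑ i ∈ s, ∑ x ∈ (μ i).support,
                  ((Lam s)⁻¹ * (lam i * μ i x)) * Real.log (Zker t (νs s) x) := by
                simp only [hQ]
                rw [hνs_supp s hsne, Finset.sum_biUnion (hpd s)]
                refine Finset.sum_congr rfl fun i hi => Finset.sum_congr rfl fun x hx => ?_
                rw [hνs_val s i hi x hx]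
              rw [e2, Finset.mul_sum]
              refine Finset.sum_congr rfl fun i _ => ?_
              rw [Finset.mul_sum]
              refine Finset.sum_congr rfl fun x _ => ?_
              field_simp
          rw [hinner]
          ring
  -- weights sum to one
  have hw1 : (∑ s ∈ F, β s * Lam s) = 1 := by
    have e0 : (∑ s ∈ F, β s * Lam s) = ∑ s : Finset (Fin n), β s * Lam s := by
      simp only [hF]
      refine Finset.sum_filter_of_ne fun s _ h => ?_
      intro hs
      rw [hs, hβ0, zero_mul] at h
      exact h rfl
    rw [e0]
    calc (∑ s : Finset (Fin n), β s * Lam s)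
        = ∑ s : Finset (Fin n), ∑ i, (if i ∈ s then β s * lam i else 0) := by
          refine Finset.sum_congr rfl fun s _ => ?_
          simp only [hLam]
          rw [Finset.mul_sum]
          exact ((Finset.sum_ite_mem Finset.univ s fun i => β s * lam i).trans
            (by rw [Finset.univ_inter])).symm
      _ = ∑ i, ∑ s : Finset (Fin n), (if i ∈ s then β s * lam i else 0) := Finset.sum_comm
      _ = ∑ i, lam i := by
          refine Finset.sum_congr rfl fun i _ => ?_
          have : (∑ s : Finset (Fin n), (if i ∈ s then β s * lam i else 0))
              = (∑ s : Finset (Fin n), (if i ∈ s then β s else 0)) * lam i := by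
            rw [Finset.sum_mul]
            refine Finset.sum_congr rfl fun s _ => ?_
            by_cases hi : i ∈ s <;> simp [hi]
          rw [this, hβ.2 i, one_mul]
      _ = 1 := hsum
  have hw0 : ∀ s ∈ F, 0 ≤ β s * Lam s := by
    intro s hs
    have hsne : s.Nonempty := Finset.nonempty_iff_ne_empty.mpr (by
      rw [hF] at hs; exact (Finset.mem_filter.mp hs).2)
    exact mul_nonneg (hβ.1 s) (hLpos s hsne).le
  -- Jensen
  have jensen : Real.exp (∑ s ∈ F, (β s * Lam s) • ((-(Q s)) - Real.log (Lam s)))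
      ≤ ∑ s ∈ F, (β s * Lam s) • Real.exp ((-(Q s)) - Real.log (Lam s)) :=
    convexOn_exp.map_sum_le hw0 hw1 (fun _ _ => Set.mem_univ _)
  simp only [smul_eq_mul] at jensen
  -- conclude
  have main : (-(∑ x ∈ ν.support, ν x * Real.log (Zker t ν x)))
      ≤ ∑ s ∈ F, (β s * Lam s) * ((-(Q s)) - Real.log (Lam s)) := by
    have h1 : (∑ s ∈ F, (β s * Lam s) * (Real.log (Lam s) + Q s))
        ≤ ∑ x ∈ ν.support, ν x * Real.log (Zker t ν x) := by
      rw [hRHS, ← hLHS]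
      exact hM
    have h2 : (∑ s ∈ F, (β s * Lam s) * ((-(Q s)) - Real.log (Lam s)))
        = -(∑ s ∈ F, (β s * Lam s) * (Real.log (Lam s) + Q s)) := by
      rw [← Finset.sum_neg_distrib]
      exact Finset.sum_congr rfl fun s _ => by ring
    rw [h2]
    linarith
  have hDν : Done t ν = Real.exp (-(∑ x ∈ ν.support, ν x * Real.log (Zker t ν x))) := rfl
  have hgoal : Done t ν ≤ ∑ s ∈ F, β s * Done t (νs s) := by
    calc Done t ν = Real.exp (-(∑ x ∈ ν.support, ν x * Real.log (Zker t ν x))) := hDν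
      _ ≤ Real.exp (∑ s ∈ F, (β s * Lam s) * ((-(Q s)) - Real.log (Lam s))) :=
          Real.exp_le_exp.mpr main
      _ ≤ ∑ s ∈ F, (β s * Lam s) * Real.exp ((-(Q s)) - Real.log (Lam s)) := jensen
      _ = ∑ s ∈ F, β s * Done t (νs s) := by
          refine Finset.sum_congr rfl fun s hs => ?_
          have hsne : s.Nonempty := Finset.nonempty_iff_ne_empty.mpr (by
            rw [hF] at hs; exact (Finset.mem_filter.mp hs).2)
          have hLs := hLpos s hsne
          have hD : Done t (νs s) = Real.exp (-(Q s)) := by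
            simp only [Done, hQ]
          rw [hD, Real.exp_sub, Real.exp_log hLs]
          field_simp
  have hνs_eq : ∀ s : Finset (Fin n),
      νs s = (∑ i ∈ s, lam i)⁻¹ • ∑ i ∈ s, lam i • μ i := by
    intro s
    simp only [hνsdef, hm, hLam]
  calc Done t ν ≤ ∑ s ∈ F, β s * Done t (νs s) := hgoal
    _ = ∑ s ∈ Finset.univ.filter (fun s : Finset (Fin n) => s ≠ ∅),
          β s * Done t ((∑ i ∈ s, lam i)⁻¹ • ∑ i ∈ s, lam i • μ i) := by
        rw [hF]
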